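/- arXiv:1406.4023 — 9 statements merged into one kernel-verified Lean document; each statement's English description precedes it below -/
import Mathlib

section
/- Let X and Y be Polish spaces and let A, B be analytic subsets of X × Y. If the product of the projections of A, i.e. Π₀[A] × Π₁[A], is disjoint from B, then there exists a Borel set C ⊆ X and a Borel set D ⊆ Y such that A ⊆ C × D and (C × D) ∩ B = ∅. -/
open MeasureTheory Set

theorem analyticSet_inter' {α : Type*} [TopologicalSpace α] [T2Space α] {s t : Set α}
    (hs : AnalyticSet s) (ht : AnalyticSet t) : AnalyticSet (s ∩ t) := by
  rw [Set.inter_eq_iInter]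
  exact AnalyticSet.iInter fun b => by cases b <;> simpa

/-- If `A, B` are analytic subsets of a product of Polish spaces and the product of the
projections of `A` is disjoint from `B`, then `A` is separable from `B` by a Borel
rectangle `C × D`. -/
theorem stmt0 {X Y : Type*}
    [TopologicalSpace X] [PolishSpace X] [MeasurableSpace X] [BorelSpace X]
    [TopologicalSpace Y] [PolishSpace Y] [MeasurableSpace Y] [BorelSpace Y]
    (A B : Set (X × Y)) (hA : AnalyticSet A) (hB : AnalyticSet B)
    (h : ((Prod.fst '' A) ×ˢ (Prod.snd '' A)) ∩ B = ∅) :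
    ∃ (C : Set X) (D : Set Y), MeasurableSet C ∧ MeasurableSet D ∧
      A ⊆ C ×ˢ D ∧ (C ×ˢ D) ∩ B = ∅ := by
  set A₀ := Prod.fst '' A with hA₀
  set A₁ := Prod.snd '' A with hA₁
  have hA₀a : AnalyticSet A₀ := hA.image_of_continuous continuous_fst
  have hA₁a : AnalyticSet A₁ := hA.image_of_continuous continuous_snd
  -- E = projection to X of B ∩ (univ ×ˢ A₁)
  have hUA₁ : AnalyticSet ((univ : Set X) ×ˢ A₁) := by
    obtain ⟨β, _, _, f, hf, hfr⟩ := analyticSet_iff_exists_polishSpace_range.1 hA₁a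
    rw [← hfr]
    have : (univ : Set X) ×ˢ range f = range (fun p : X × β => (p.1, f p.2)) := by
      ext ⟨x, y⟩
      simp [Prod.ext_iff, eq_comm]
    rw [this]
    exact analyticSet_range_of_polishSpace (continuous_fst.prodMk (hf.comp continuous_snd))
  set E := Prod.fst '' (B ∩ ((univ : Set X) ×ˢ A₁)) with hE
  have hEa : AnalyticSet E :=
    (analyticSet_inter' hB hUA₁).image_of_continuous continuous_fst
  have hdis1 : Disjoint A₀ E := by
    rw [Set.disjoint_left]
    rintro x hx hxE
    obtain ⟨⟨x', y⟩, ⟨hb, -, hy⟩, hxx⟩ := hxE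
    subst hxx
    have : (x', y) ∈ A₀ ×ˢ A₁ ∩ B := ⟨⟨hx, hy⟩, hb⟩
    rw [h] at this
    exact this
  obtain ⟨C, hCsub, hCdis, hCm⟩ := hA₀a.measurablySeparable hEa hdis1
  -- F = projection to Y of B ∩ (C ×ˢ univ)
  have hCU : AnalyticSet (C ×ˢ (univ : Set Y)) :=
    (hCm.prod MeasurableSet.univ).analyticSet
  set F := Prod.snd '' (B ∩ (C ×ˢ (univ : Set Y))) with hF
  have hFa : AnalyticSet F :=
    (analyticSet_inter' hB hCU).image_of_continuous continuous_snd
  have hdis2 : Disjoint A₁ F := by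
    rw [Set.disjoint_left]
    rintro y hy ⟨⟨x, y'⟩, ⟨hb, hx, -⟩, rfl⟩
    exact (Set.disjoint_right.1 hCdis) hx ⟨(x, y'), ⟨hb, trivial, hy⟩, rfl⟩
  obtain ⟨D, hDsub, hDdis, hDm⟩ := hA₁a.measurablySeparable hFa hdis2
  refine ⟨C, D, hCm, hDm, ?_, ?_⟩
  · rintro ⟨x, y⟩ hxy
    exact ⟨hCsub ⟨_, hxy, rfl⟩, hDsub ⟨_, hxy, rfl⟩⟩
  · ext ⟨x, y⟩
    simp only [Set.mem_inter_iff, Set.mem_prod, Set.mem_empty_iff_false, iff_false, not_and]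
    rintro ⟨hx, hy⟩ hb
    exact (Set.disjoint_right.1 hDdis) hy ⟨(x, y), ⟨hb, hx, trivial⟩, rfl⟩
end

section
/- Let X, Y be Polish spaces, let τ, τ' be second countable topologies on X and Y respectively refining the original topologies, and let A, B ⊆ X × Y be arbitrary subsets. Suppose both of the following fail: (1) there is x ∈ Π₀[A] such that for every τ-open neighborhood U of x there is y ∈ Π₁[A] such that every τ'-open neighborhood V of y satisfies (U × V) ∩ B ≠ ∅; (2) the symmetric statement with the roles of the two coordinates exchanged. Then A is separable from B by a set of the form U × V with U τ-open and V τ'-open. -/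
open Set Topology
section Aux
variable {X Y : Type*}
def Sproj (B : Set (X × Y)) (U : Set X) : Set Y := Prod.snd '' (B ∩ U ×ˢ (univ : Set Y))
def Tproj (B : Set (X × Y)) (V : Set Y) : Set X := Prod.fst '' (B ∩ (univ : Set X) ×ˢ V)
lemma mem_Sproj {B : Set (X × Y)} {U : Set X} {y : Y} :
    y ∈ Sproj B U ↔ ∃ x, (x, y) ∈ B ∧ x ∈ U := by
  constructor
  · rintro ⟨⟨a, b⟩, ⟨hB, ha, -⟩, rfl⟩; exact ⟨a, hB, ha⟩
  · rintro ⟨x, hB, hx⟩; exact ⟨(x, y), ⟨hB, hx, trivial⟩, rfl⟩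
lemma mem_Tproj {B : Set (X × Y)} {V : Set Y} {x : X} :
    x ∈ Tproj B V ↔ ∃ y, (x, y) ∈ B ∧ y ∈ V := by
  constructor
  · rintro ⟨⟨a, b⟩, ⟨hB, -, hb⟩, rfl⟩; exact ⟨b, hB, hb⟩
  · rintro ⟨y, hB, hy⟩; exact ⟨(x, y), ⟨hB, trivial, hy⟩, rfl⟩
lemma Sproj_mono {B : Set (X × Y)} {U U' : Set X} (h : U ⊆ U') : Sproj B U ⊆ Sproj B U' := by
  intro y hy; rw [mem_Sproj] at *; obtain ⟨x, hB, hx⟩ := hy; exact ⟨x, hB, h hx⟩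
lemma Tproj_mono {B : Set (X × Y)} {V V' : Set Y} (h : V ⊆ V') : Tproj B V ⊆ Tproj B V' := by
  intro x hx; rw [mem_Tproj] at *; obtain ⟨y, hB, hy⟩ := hx; exact ⟨y, hB, h hy⟩
noncomputable def Useq (τ : TopologicalSpace X) (τ' : TopologicalSpace Y)
    (B : Set (X × Y)) (f : ℕ → Set X) (g : ℕ → Set Y) : ℕ → Set X
  | n => f n \ ⋃ k, ⋃ (_ : k < n), @closure X τ (Tproj B
      (g k \ ⋃ j, ⋃ (_ : j ≤ k), @closure Y τ' (Sproj B (Useq τ τ' B f g j))))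
  termination_by n => n
  decreasing_by omega
noncomputable def Vseq (τ : TopologicalSpace X) (τ' : TopologicalSpace Y)
    (B : Set (X × Y)) (f : ℕ → Set X) (g : ℕ → Set Y) (k : ℕ) : Set Y :=
  g k \ ⋃ j, ⋃ (_ : j ≤ k), @closure Y τ' (Sproj B (Useq τ τ' B f g j))
lemma Useq_def (τ : TopologicalSpace X) (τ' : TopologicalSpace Y)
    (B : Set (X × Y)) (f : ℕ → Set X) (g : ℕ → Set Y) (n : ℕ) :
    Useq τ τ' B f g n = f n \ ⋃ k, ⋃ (_ : k < n), @closure X τ (Tproj B (Vseq τ τ' B f g k)) := by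
  rw [Useq]; rfl

variable [τ : TopologicalSpace X] [τ' : TopologicalSpace Y]

lemma main_combo (A B : Set (X × Y)) (f : ℕ → Set X) (g : ℕ → Set Y)
    (hfo : ∀ n, IsOpen (f n)) (hgo : ∀ n, IsOpen (g n))
    (hPf : Prod.fst '' A ⊆ ⋃ n, f n) (hQg : Prod.snd '' A ⊆ ⋃ n, g n)
    (hf : ∀ n, (Prod.snd '' A) ∩ closure (Sproj B (f n)) = ∅)
    (hg : ∀ n, (Prod.fst '' A) ∩ closure (Tproj B (g n)) = ∅) :
    ∃ (U : Set X) (V : Set Y), IsOpen U ∧ IsOpen V ∧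
      A ⊆ U ×ˢ V ∧ (U ×ˢ V) ∩ B = ∅ := by
  set U' := Useq τ τ' B f g with hU'
  set V' := Vseq τ τ' B f g with hV'
  have hVsub : ∀ k, V' k ⊆ g k := fun k => diff_subset
  have hUsub : ∀ n, U' n ⊆ f n := by
    intro n; rw [hU', Useq_def]; exact diff_subset
  -- openness
  have hVo : ∀ k, IsOpen (V' k) := by
    intro k
    rw [hV', Vseq]
    apply (hgo k).sdiff
    exact (Set.finite_Iic k).isClosed_biUnion (fun j _ => isClosed_closure)
  have hUo : ∀ n, IsOpen (U' n) := by
    intro n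
    rw [hU', Useq_def]
    apply (hfo n).sdiff
    exact (Set.finite_Iio n).isClosed_biUnion (fun j _ => isClosed_closure)
  -- coverage
  have hPU : Prod.fst '' A ⊆ ⋃ n, U' n := by
    intro x hx
    obtain ⟨n, hn⟩ := mem_iUnion.mp (hPf hx)
    refine mem_iUnion.mpr ⟨n, ?_⟩
    rw [hU', Useq_def]
    refine ⟨hn, ?_⟩
    simp only [mem_iUnion, not_exists]
    intro k _ hcl
    have : x ∈ closure (Tproj B (g k)) :=
      closure_mono (Tproj_mono (hVsub k)) hcl
    exact absurd (mem_inter hx this) (by rw [hg k]; exact notMem_empty x)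
  have hQV : Prod.snd '' A ⊆ ⋃ k, V' k := by
    intro y hy
    obtain ⟨k, hk⟩ := mem_iUnion.mp (hQg hy)
    refine mem_iUnion.mpr ⟨k, ?_⟩
    rw [hV', Vseq]
    refine ⟨hk, ?_⟩
    simp only [mem_iUnion, not_exists]
    intro j _ hcl
    have : y ∈ closure (Sproj B (f j)) :=
      closure_mono (Sproj_mono (hUsub j)) hcl
    exact absurd (mem_inter hy this) (by rw [hf j]; exact notMem_empty y)
  -- disjointness
  have hdisj : ∀ j k, (U' j ×ˢ V' k) ∩ B = ∅ := by
    intro j k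
    rw [eq_empty_iff_forall_notMem]
    rintro ⟨a, b⟩ ⟨⟨haU, hbV⟩, hB⟩
    rcases le_or_gt j k with hjk | hkj
    · -- b is in the removed part of V' k
      have hbS : b ∈ Sproj B (U' j) := mem_Sproj.mpr ⟨a, hB, haU⟩
      rw [hV', Vseq] at hbV
      exact hbV.2 (mem_iUnion.mpr ⟨j, mem_iUnion.mpr ⟨hjk, subset_closure hbS⟩⟩)
    · have haT : a ∈ Tproj B (V' k) := mem_Tproj.mpr ⟨b, hB, hbV⟩
      rw [hU', Useq_def] at haU
      exact haU.2 (mem_iUnion.mpr ⟨k, mem_iUnion.mpr ⟨hkj, subset_closure haT⟩⟩)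
  refine ⟨⋃ n, U' n, ⋃ k, V' k, isOpen_iUnion hUo, isOpen_iUnion hVo, ?_, ?_⟩
  · rintro ⟨a, b⟩ hab
    exact ⟨hPU ⟨(a, b), hab, rfl⟩, hQV ⟨(a, b), hab, rfl⟩⟩
  · rw [eq_empty_iff_forall_notMem]
    rintro ⟨a, b⟩ ⟨⟨haU, hbV⟩, hB⟩
    obtain ⟨j, hj⟩ := mem_iUnion.mp haU
    obtain ⟨k, hk⟩ := mem_iUnion.mp hbV
    have hd := hdisj j k
    rw [eq_empty_iff_forall_notMem] at hd
    exact hd (a, b) ⟨⟨hj, hk⟩, hB⟩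
end Aux

section Aux2
variable {X Y : Type*} [τ : TopologicalSpace X] [τ' : TopologicalSpace Y]

omit τ in
lemma closure_sep_S {B : Set (X × Y)} {U : Set X} {Q : Set Y}
    (h : ∀ y ∈ Q, ∃ V, IsOpen V ∧ y ∈ V ∧ (U ×ˢ V) ∩ B = ∅) :
    Q ∩ closure (Sproj B U) = ∅ := by
  rw [eq_empty_iff_forall_notMem]
  rintro y ⟨hyQ, hycl⟩
  obtain ⟨V, hVo, hyV, hne⟩ := h y hyQ
  obtain ⟨b, hbV, hbS⟩ := mem_closure_iff.mp hycl V hVo hyV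
  obtain ⟨x, hB, hxU⟩ := mem_Sproj.mp hbS
  exact eq_empty_iff_forall_notMem.mp hne (x, b) ⟨⟨hxU, hbV⟩, hB⟩

omit τ' in
lemma closure_sep_T {B : Set (X × Y)} {V : Set Y} {P : Set X}
    (h : ∀ x ∈ P, ∃ U, IsOpen U ∧ x ∈ U ∧ (U ×ˢ V) ∩ B = ∅) :
    P ∩ closure (Tproj B V) = ∅ := by
  rw [eq_empty_iff_forall_notMem]
  rintro x ⟨hxP, hxcl⟩
  obtain ⟨U, hUo, hxU, hne⟩ := h x hxP
  obtain ⟨a, haU, haT⟩ := mem_closure_iff.mp hxcl U hUo hxU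
  obtain ⟨y, hB, hyV⟩ := mem_Tproj.mp haT
  exact eq_empty_iff_forall_notMem.mp hne (a, y) ⟨⟨haU, hyV⟩, hB⟩

/-- countable reduction: from a pointwise choice of good open sets, get a sequence. -/
lemma countable_reduction {α : Type*} [TopologicalSpace α] [SecondCountableTopology α]
    {P : Set α} (hP : P.Nonempty) (Φ : Set α → Prop)
    (h : ∀ x ∈ P, ∃ U, IsOpen U ∧ x ∈ U ∧ Φ U) :
    ∃ f : ℕ → Set α, (∀ n, IsOpen (f n)) ∧ (∀ n, Φ (f n)) ∧ P ⊆ ⋃ n, f n := by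
  choose u hu1 hu2 hu3 using fun x : P => h x.1 x.2
  obtain ⟨T, hTc, hTeq⟩ := TopologicalSpace.isOpen_iUnion_countable u hu1
  have hPsub : P ⊆ ⋃ x ∈ T, u x := by
    rw [hTeq]; intro x hx; exact mem_iUnion.mpr ⟨⟨x, hx⟩, hu2 _⟩
  have hTne : T.Nonempty := by
    obtain ⟨x, hx⟩ := hP
    obtain ⟨i, hiT, -⟩ := mem_iUnion₂.mp (hPsub hx)
    exact ⟨i, hiT⟩
  obtain ⟨e, he⟩ := hTc.exists_eq_range hTne
  refine ⟨fun n => u (e n), fun n => hu1 _, fun n => hu3 _, ?_⟩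
  intro x hx
  obtain ⟨i, hiT, hxi⟩ := mem_iUnion₂.mp (hPsub hx)
  have : i ∈ range e := he ▸ hiT
  obtain ⟨n, rfl⟩ := this
  exact mem_iUnion.mpr ⟨n, hxi⟩

theorem stmt6_aux [SecondCountableTopology X] [SecondCountableTopology Y]
    (A B : Set (X × Y))
    (h1 : ¬ ∃ x ∈ Prod.fst '' A, ∀ U : Set X, IsOpen U → x ∈ U →
      ∃ y ∈ Prod.snd '' A, ∀ V : Set Y, IsOpen V → y ∈ V → ((U ×ˢ V) ∩ B).Nonempty)
    (h2 : ¬ ∃ y ∈ Prod.snd '' A, ∀ V : Set Y, IsOpen V → y ∈ V →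
      ∃ x ∈ Prod.fst '' A, ∀ U : Set X, IsOpen U → x ∈ U → ((U ×ˢ V) ∩ B).Nonempty) :
    ∃ (U : Set X) (V : Set Y), IsOpen U ∧ IsOpen V ∧
      A ⊆ U ×ˢ V ∧ (U ×ˢ V) ∩ B = ∅ := by
  rcases A.eq_empty_or_nonempty with rfl | hA
  · exact ⟨∅, ∅, isOpen_empty, isOpen_empty, by simp, by simp⟩
  push_neg at h1 h2
  have hP : (Prod.fst '' A).Nonempty := hA.image _
  have hQ : (Prod.snd '' A).Nonempty := hA.image _
  obtain ⟨f, hfo, hfΦ, hPf⟩ := countable_reduction hP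
    (fun U => (Prod.snd '' A) ∩ closure (Sproj B U) = ∅)
    (fun x hx => by
      obtain ⟨U, hUo, hxU, hin⟩ := h1 x hx
      exact ⟨U, hUo, hxU, closure_sep_S hin⟩)
  obtain ⟨g, hgo, hgΦ, hQg⟩ := countable_reduction hQ
    (fun V => (Prod.fst '' A) ∩ closure (Tproj B V) = ∅)
    (fun y hy => by
      obtain ⟨V, hVo, hyV, hin⟩ := h2 y hy
      exact ⟨V, hVo, hyV, closure_sep_T hin⟩)
  exact main_combo A B f g hfo hgo hPf hQg hfΦ hgΦ
end Aux2

/-- Lemma 4 of the paper, abstract form: if both double-limit conditions fail for finer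
second-countable topologies `τ, τ'`, then `A` is separable from `B` by a `τ × τ'`-open
rectangle. -/
theorem stmt6 {X Y : Type*}
    [tX : TopologicalSpace X] [PolishSpace X] [tY : TopologicalSpace Y] [PolishSpace Y]
    (τ : TopologicalSpace X) (τ' : TopologicalSpace Y)
    (hτ : τ ≤ tX) (hτ' : τ' ≤ tY)
    (hsc : @SecondCountableTopology X τ) (hsc' : @SecondCountableTopology Y τ')
    (A B : Set (X × Y))
    (h1 : ¬ ∃ x ∈ Prod.fst '' A, ∀ U : Set X, IsOpen[τ] U → x ∈ U →
      ∃ y ∈ Prod.snd '' A, ∀ V : Set Y, IsOpen[τ'] V → y ∈ V → ((U ×ˢ V) ∩ B).Nonempty)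
    (h2 : ¬ ∃ y ∈ Prod.snd '' A, ∀ V : Set Y, IsOpen[τ'] V → y ∈ V →
      ∃ x ∈ Prod.fst '' A, ∀ U : Set X, IsOpen[τ] U → x ∈ U → ((U ×ˢ V) ∩ B).Nonempty) :
    ∃ (U : Set X) (V : Set Y), IsOpen[τ] U ∧ IsOpen[τ'] V ∧
      A ⊆ U ×ˢ V ∧ (U ×ˢ V) ∩ B = ∅ :=
  @stmt6_aux X Y τ τ' hsc hsc' A B h1 h2
end

section
/- Let X, Y be Polish spaces and A, B ⊆ X × Y disjoint sets. If A is not separable from B by a set of the form U × V with U open in X and V open in Y, then at least one of the following holds: (1) there exists x ∈ Π₀[A] such that for every open neighborhood U of x there exists y ∈ Π₁[A] such that for every open neighborhood V of y, (U × V) ∩ B ≠ ∅; or (2) there exists y ∈ Π₁[A] such that for every open neighborhood V of y there exists x ∈ Π₀[A] such that for every open neighborhood U of x, (U × V) ∩ B ≠ ∅. -/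
open Set

/-- If disjoint `A, B ⊆ X × Y` cannot be separated by an open rectangle, then one of the
two double-limit conditions holds. -/
theorem stmt7 {X Y : Type*}
    [TopologicalSpace X] [PolishSpace X] [TopologicalSpace Y] [PolishSpace Y]
    (A B : Set (X × Y)) (hdisj : A ∩ B = ∅)
    (h : ¬ ∃ (U : Set X) (V : Set Y), IsOpen U ∧ IsOpen V ∧
      A ⊆ U ×ˢ V ∧ (U ×ˢ V) ∩ B = ∅) :
    (∃ x ∈ Prod.fst '' A, ∀ U : Set X, IsOpen U → x ∈ U →
      ∃ y ∈ Prod.snd '' A, ∀ V : Set Y, IsOpen V → y ∈ V → ((U ×ˢ V) ∩ B).Nonempty) ∨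
    (∃ y ∈ Prod.snd '' A, ∀ V : Set Y, IsOpen V → y ∈ V →
      ∃ x ∈ Prod.fst '' A, ∀ U : Set X, IsOpen U → x ∈ U → ((U ×ˢ V) ∩ B).Nonempty) := by
  by_contra hcon
  push_neg at hcon
  obtain ⟨h1, h2⟩ := hcon

  apply h
  rcases A.eq_empty_or_nonempty with hA | hA
  · exact ⟨∅, ∅, isOpen_empty, isOpen_empty, by simp [hA], by simp⟩
  set S := Prod.fst '' A with hS
  set T := Prod.snd '' A with hT
  have step1 : ∀ x ∈ S, ∃ U V, IsOpen U ∧ IsOpen V ∧ x ∈ U ∧ T ⊆ V ∧ (U ×ˢ V) ∩ B = ∅ := by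
    intro x hx
    obtain ⟨U, hUo, hxU, hU⟩ := h1 x hx
    choose! V hVo hyV hVB using hU
    refine ⟨U, ⋃ y ∈ T, V y, hUo, isOpen_biUnion hVo, hxU, ?_, ?_⟩
    · intro y hy; exact mem_biUnion hy (hyV y hy)
    · ext p
      simp only [mem_inter_iff, mem_empty_iff_false, iff_false, not_and, mem_prod, mem_iUnion]
      rintro ⟨hp1, y, hyT, hpV⟩ hpB
      have : p ∈ (U ×ˢ V y) ∩ B := ⟨⟨hp1, hpV⟩, hpB⟩
      rw [hVB y hyT] at this
      exact this
  have step2 : ∀ y ∈ T, ∃ U V, IsOpen U ∧ IsOpen V ∧ y ∈ V ∧ S ⊆ U ∧ (U ×ˢ V) ∩ B = ∅ := by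
    intro y hy
    obtain ⟨V, hVo, hyV, hV⟩ := h2 y hy
    choose! U hUo hxU hUB using hV
    refine ⟨⋃ x ∈ S, U x, V, isOpen_biUnion hUo, hVo, hyV, ?_, ?_⟩
    · intro x hx; exact mem_biUnion hx (hxU x hx)
    · ext p
      simp only [mem_inter_iff, mem_empty_iff_false, iff_false, not_and, mem_prod, mem_iUnion]
      rintro ⟨⟨x, hxS, hpU⟩, hp2⟩ hpB
      have : p ∈ (U x ×ˢ V) ∩ B := ⟨⟨hpU, hp2⟩, hpB⟩
      rw [hUB x hxS] at this
      exact this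
  choose! Ux Vx hUxo hVxo hxUx hTVx hxB using step1
  choose! Uy Vy hUyo hVyo hyVy hSUy hyB using step2
  -- countable subcover of S by the Ux's
  obtain ⟨t, htc, htu⟩ := TopologicalSpace.isOpen_iUnion_countable
    (fun x : S => Ux x) (fun x => hUxo x x.2)
  obtain ⟨s, hsc, hsu⟩ := TopologicalSpace.isOpen_iUnion_countable
    (fun y : T => Vy y) (fun y => hVyo y y.2)
  obtain ⟨a, haA⟩ := hA
  have haS : (a.1 : X) ∈ S := ⟨a, haA, rfl⟩
  have haT : (a.2 : Y) ∈ T := ⟨a, haA, rfl⟩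
  have htne : t.Nonempty := by
    by_contra hte
    rw [not_nonempty_iff_eq_empty] at hte
    have : (a.1 : X) ∈ ⋃ x : S, Ux x := mem_iUnion.2 ⟨⟨a.1, haS⟩, hxUx a.1 haS⟩
    rw [← htu, hte] at this
    simp at this
  have hsne : s.Nonempty := by
    by_contra hse
    rw [not_nonempty_iff_eq_empty] at hse
    have : (a.2 : Y) ∈ ⋃ y : T, Vy y := mem_iUnion.2 ⟨⟨a.2, haT⟩, hyVy a.2 haT⟩
    rw [← hsu, hse] at this
    simp at this
  obtain ⟨f, hf⟩ := htc.exists_eq_range htne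
  obtain ⟨g, hg⟩ := hsc.exists_eq_range hsne
  set xs : ℕ → X := fun n => ((f n : S) : X) with hxs
  set ys : ℕ → Y := fun n => ((g n : T) : Y) with hys
  have hxsS : ∀ n, xs n ∈ S := fun n => (f n).2
  have hysT : ∀ n, ys n ∈ T := fun n => (g n).2
  have hScov : S ⊆ ⋃ n, Ux (xs n) := by
    intro x hx
    have : x ∈ ⋃ i : S, Ux i := mem_iUnion.2 ⟨⟨x, hx⟩, hxUx x hx⟩
    rw [← htu, hf] at this
    obtain ⟨i, ⟨n, hn⟩, hxi⟩ := mem_iUnion₂.1 this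
    exact mem_iUnion.2 ⟨n, by simp only [hxs, hn]; exact hxi⟩
  have hTcov : T ⊆ ⋃ n, Vy (ys n) := by
    intro y hy
    have : y ∈ ⋃ i : T, Vy i := mem_iUnion.2 ⟨⟨y, hy⟩, hyVy y hy⟩
    rw [← hsu, hg] at this
    obtain ⟨i, ⟨n, hn⟩, hyi⟩ := mem_iUnion₂.1 this
    exact mem_iUnion.2 ⟨n, by simp only [hys, hn]; exact hyi⟩
  refine ⟨⋃ n, (Ux (xs n) ∩ ⋂ m ∈ Set.Iic n, Uy (ys m)),
         ⋃ n, (Vy (ys n) ∩ ⋂ m ∈ Set.Iic n, Vx (xs m)), ?_, ?_, ?_, ?_⟩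
  · exact isOpen_iUnion fun n => (hUxo _ (hxsS n)).inter
      ((Set.finite_Iic n).isOpen_biInter fun m _ => hUyo _ (hysT m))
  · exact isOpen_iUnion fun n => (hVyo _ (hysT n)).inter
      ((Set.finite_Iic n).isOpen_biInter fun m _ => hVxo _ (hxsS m))
  · rintro ⟨p, q⟩ hpq
    have hpS : p ∈ S := ⟨(p, q), hpq, rfl⟩
    have hqT : q ∈ T := ⟨(p, q), hpq, rfl⟩
    obtain ⟨n, hn⟩ := mem_iUnion.1 (hScov hpS)
    obtain ⟨k, hk⟩ := mem_iUnion.1 (hTcov hqT)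
    refine ⟨mem_iUnion.2 ⟨n, hn, ?_⟩, mem_iUnion.2 ⟨k, hk, ?_⟩⟩
    · exact mem_biInter fun m _ => hSUy _ (hysT m) hpS
    · exact mem_biInter fun m _ => hTVx _ (hxsS m) hqT
  · ext p
    simp only [mem_inter_iff, mem_empty_iff_false, iff_false, not_and, mem_prod, mem_iUnion]
    rintro ⟨⟨n, hp1U, hp1I⟩, ⟨k, hp2V, hp2I⟩⟩ hpB
    rcases le_total n k with hnk | hkn
    · have hq : p.2 ∈ Vx (xs n) := mem_of_mem_of_subset hp2I (biInter_subset_of_mem hnk)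
      have : p ∈ (Ux (xs n) ×ˢ Vx (xs n)) ∩ B := ⟨⟨hp1U, hq⟩, hpB⟩
      rw [hxB _ (hxsS n)] at this
      exact this
    · have hq : p.1 ∈ Uy (ys k) := mem_of_mem_of_subset hp1I (biInter_subset_of_mem hkn)
      have : p ∈ (Uy (ys k) ×ˢ Vy (ys k)) ∩ B := ⟨⟨hq, hp2V⟩, hpB⟩
      rw [hyB _ (hysT k)] at this
      exact this
end

section
/- Let X, Y be Polish spaces and A, B ⊆ X × Y disjoint sets. Then A is separable from B by a set of the form C × U with C closed in X and U open in Y if and only if for every y ∈ Π₁[A] there is an open neighborhood V of y such that (cl(Π₀[A]) × V) ∩ B = ∅, where cl denotes closure in X. -/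
open Set

/-- `A` is separable from `B` by a closed × open rectangle iff every point of `Π₁[A]` has an
open neighborhood `V` with `(cl(Π₀[A]) × V) ∩ B = ∅`. -/
theorem stmt8 {X Y : Type*}
    [TopologicalSpace X] [PolishSpace X] [TopologicalSpace Y] [PolishSpace Y]
    (A B : Set (X × Y)) (hdisj : A ∩ B = ∅) :
    (∃ (C : Set X) (U : Set Y), IsClosed C ∧ IsOpen U ∧
      A ⊆ C ×ˢ U ∧ (C ×ˢ U) ∩ B = ∅) ↔
    (∀ y ∈ Prod.snd '' A, ∃ V : Set Y, IsOpen V ∧ y ∈ V ∧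
      (closure (Prod.fst '' A) ×ˢ V) ∩ B = ∅) := by
  constructor
  · rintro ⟨C, U, hC, hU, hAsub, hCUB⟩ y ⟨⟨x, y'⟩, hxyA, rfl⟩
    refine ⟨U, hU, (hAsub hxyA).2, ?_⟩
    have hcl : closure (Prod.fst '' A) ⊆ C := by
      apply closure_minimal _ hC
      rintro _ ⟨p, hp, rfl⟩
      exact (hAsub hp).1
    rw [eq_empty_iff_forall_notMem] at hCUB ⊢
    rintro ⟨a, b⟩ ⟨⟨ha, hb⟩, hB⟩
    exact hCUB (a, b) ⟨⟨hcl ha, hb⟩, hB⟩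
  · intro h
    refine ⟨closure (Prod.fst '' A),
      ⋃₀ {V : Set Y | IsOpen V ∧ (closure (Prod.fst '' A) ×ˢ V) ∩ B = ∅},
      isClosed_closure, isOpen_sUnion (fun V hV => hV.1), ?_, ?_⟩
    · rintro ⟨x, y⟩ hxy
      refine ⟨subset_closure ⟨(x, y), hxy, rfl⟩, ?_⟩
      obtain ⟨V, hVo, hyV, hVB⟩ := h y ⟨(x, y), hxy, rfl⟩
      exact ⟨V, ⟨hVo, hVB⟩, hyV⟩
    · rw [eq_empty_iff_forall_notMem]
      rintro ⟨a, b⟩ ⟨⟨ha, hb⟩, hB⟩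
      obtain ⟨V, ⟨hVo, hVB⟩, hbV⟩ := hb
      rw [eq_empty_iff_forall_notMem] at hVB
      exact hVB (a, b) ⟨⟨ha, hbV⟩, hB⟩
end

section
/- In Baire space ω^ω, let 𝔸 := {(n^∞, n^∞) : n ∈ ω}, 𝔹₀ := {(0^{n+1}(m+1)^∞, (n+1)^{m+1}0^∞) : n, m ∈ ω}. Then 𝔸 is not separable from 𝔹₀ by an open rectangle: for all open sets U, V ⊆ ω^ω with 𝔸 ⊆ U × V, we have (U × V) ∩ 𝔹₀ ≠ ∅. -/
open Set

/-- `n^∞`, the constant sequence with value `n`. -/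
def constSeq (n : ℕ) : ℕ → ℕ := fun _ => n

/-- `0^{n+1}(m+1)^∞`: `n+1` zeros followed by the constant value `m+1`. -/
def zerosThen (n m : ℕ) : ℕ → ℕ := fun i => if i < n + 1 then 0 else m + 1

/-- `(n+1)^{m+1}0^∞`: `m+1` copies of `n+1` followed by zeros. -/
def blockThenZeros (n m : ℕ) : ℕ → ℕ := fun i => if i < m + 1 then n + 1 else 0

lemma cyl_mem {s : Set (ℕ → ℕ)} (hs : IsOpen s) {f : ℕ → ℕ} (hf : f ∈ s) :
    ∃ N, ∀ g : ℕ → ℕ, (∀ i < N, g i = f i) → g ∈ s := by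
  rw [isOpen_pi_iff] at hs
  obtain ⟨I, u, hu, hsub⟩ := hs f hf
  refine ⟨(I.sup id) + 1, fun g hg => hsub ?_⟩
  intro i hi
  rw [hg i (Nat.lt_succ_of_le (Finset.le_sup (f := id) hi))]
  exact (hu i hi).2

/-- `𝔸 = {(n^∞, n^∞)}` is not separable from `𝔹₀ = {(0^{n+1}(m+1)^∞, (n+1)^{m+1}0^∞)}`
by an open rectangle in Baire space. -/
theorem stmt9 (U V : Set (ℕ → ℕ)) (hU : IsOpen U) (hV : IsOpen V)
    (hsub : {p : (ℕ → ℕ) × (ℕ → ℕ) | ∃ n, p = (constSeq n, constSeq n)} ⊆ U ×ˢ V) :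
    ((U ×ˢ V) ∩
      {p : (ℕ → ℕ) × (ℕ → ℕ) | ∃ n m, p = (zerosThen n m, blockThenZeros n m)}).Nonempty := by
  have h0 : (constSeq 0, constSeq 0) ∈ U ×ˢ V := hsub ⟨0, rfl⟩
  obtain ⟨N, hN⟩ := cyl_mem hU h0.1
  have h1 : (constSeq (N + 1), constSeq (N + 1)) ∈ U ×ˢ V := hsub ⟨N + 1, rfl⟩
  obtain ⟨M, hM⟩ := cyl_mem hV h1.2
  refine ⟨(zerosThen N M, blockThenZeros N M), ⟨?_, ?_⟩, N, M, rfl⟩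
  · exact hN _ (fun i hi => by simp [zerosThen, constSeq, hi.trans (Nat.lt_succ_self N)])
  · exact hM _ (fun i hi => by simp [blockThenZeros, constSeq, hi.trans (Nat.lt_succ_self M)])
end

section
/- In Baire space ω^ω, let 𝔸 := {(n^∞, n^∞) : n ∈ ω}, 𝔹₀ := {(0^{n+1}(m+1)^∞, (n+1)^{m+1}0^∞) : n,m ∈ ω}, and 𝔹₁ := {((n+1)^{m+1}0^∞, 0^{n+1}(m+1)^∞) : n,m ∈ ω}. Then there do NOT exist continuous functions f, g : ω^ω → ω^ω such that 𝔸 ⊆ (f × g)⁻¹(𝔸) and 𝔹₀ ⊆ (f × g)⁻¹(𝔹₁). -/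
open Set Filter Topology

/-- There are no continuous `f, g` on Baire space with `𝔸 ⊆ (f×g)⁻¹(𝔸)` and
`𝔹₀ ⊆ (f×g)⁻¹(𝔹₁)`. -/
theorem stmt10 :
    ¬ ∃ (f g : (ℕ → ℕ) → (ℕ → ℕ)), Continuous f ∧ Continuous g ∧
      ({p : (ℕ → ℕ) × (ℕ → ℕ) | ∃ n, p = (constSeq n, constSeq n)} ⊆
        (fun p : (ℕ → ℕ) × (ℕ → ℕ) => (f p.1, g p.2)) ⁻¹'
          {p : (ℕ → ℕ) × (ℕ → ℕ) | ∃ n, p = (constSeq n, constSeq n)}) ∧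
      ({p : (ℕ → ℕ) × (ℕ → ℕ) | ∃ n m, p = (zerosThen n m, blockThenZeros n m)} ⊆
        (fun p : (ℕ → ℕ) × (ℕ → ℕ) => (f p.1, g p.2)) ⁻¹'
          {p : (ℕ → ℕ) × (ℕ → ℕ) | ∃ n m, p = (blockThenZeros n m, zerosThen n m)}) := by
  rintro ⟨f, g, hf, hg, hA, hB⟩
  -- constants from 𝔸
  have hAc : ∀ n, ∃ k, f (constSeq n) = constSeq k ∧ g (constSeq n) = constSeq k := by
    intro n
    obtain ⟨k, hk⟩ := hA (show (constSeq n, constSeq n) ∈ _ from ⟨n, rfl⟩)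
    exact ⟨k, congrArg Prod.fst hk, congrArg Prod.snd hk⟩
  choose k hk1 hk2 using hAc
  -- data from 𝔹₀ ⊆ (f×g)⁻¹ 𝔹₁
  have hBc : ∀ n m, ∃ n' m', f (zerosThen n m) = blockThenZeros n' m' ∧
      g (blockThenZeros n m) = zerosThen n' m' := by
    intro n m
    obtain ⟨n', m', h⟩ := hB (show (zerosThen n m, blockThenZeros n m) ∈ _ from ⟨n, m, rfl⟩)
    exact ⟨n', m', congrArg Prod.fst h, congrArg Prod.snd h⟩
  choose N M hN hM using hBc
  -- convergence facts
  have tend1 : ∀ φ : ℕ → ℕ,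
      Tendsto (fun n => zerosThen n (φ n)) atTop (𝓝 (constSeq 0)) := by
    intro φ
    rw [tendsto_pi_nhds]
    intro i
    rw [nhds_discrete, Filter.tendsto_pure]
    filter_upwards [Filter.eventually_ge_atTop i] with n hn
    simp [zerosThen, constSeq, Nat.lt_succ_of_le hn]
  have tend2 : ∀ n,
      Tendsto (fun m => blockThenZeros n m) atTop (𝓝 (constSeq (n + 1))) := by
    intro n
    rw [tendsto_pi_nhds]
    intro i
    rw [nhds_discrete, Filter.tendsto_pure]
    filter_upwards [Filter.eventually_ge_atTop i] with m hm
    simp [blockThenZeros, constSeq, Nat.lt_succ_of_le hm]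
  -- g side: for each n and coordinate i, eventually (in m) g(blockThenZeros n m) i = k (n+1)
  have gcoord : ∀ n i, ∀ᶠ m in atTop, zerosThen (N n m) (M n m) i = k (n + 1) := by
    intro n i
    have : Tendsto (fun m => g (blockThenZeros n m)) atTop (𝓝 (g (constSeq (n + 1)))) :=
      (hg.tendsto _).comp (tend2 n)
    rw [tendsto_pi_nhds] at this
    have hi := this i
    rw [nhds_discrete, Filter.tendsto_pure] at hi
    filter_upwards [hi] with m hm
    rw [← hM n m, hm, hk2 (n + 1)]
    rfl
  -- coordinate 0 gives k (n+1) = 0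
  have kzero : ∀ n, k (n + 1) = 0 := by
    intro n
    obtain ⟨m, hm⟩ := (gcoord n 0).exists
    have : zerosThen (N n m) (M n m) 0 = 0 := by simp [zerosThen]
    rw [this] at hm
    exact hm.symm
  -- for each n, find m with k 0 ≤ N n m
  have hchoice : ∀ n, ∃ m, k 0 ≤ N n m := by
    intro n
    obtain ⟨m, hm⟩ := (gcoord n (k 0)).exists
    rw [kzero n] at hm
    refine ⟨m, ?_⟩
    by_contra hlt
    push_neg at hlt
    have : zerosThen (N n m) (M n m) (k 0) = M n m + 1 := by
      simp [zerosThen, Nat.not_lt.mpr hlt]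
    omega
  choose φ hφ using hchoice
  -- f side along the diagonal
  have fτ : Tendsto (fun n => f (zerosThen n (φ n))) atTop (𝓝 (f (constSeq 0))) :=
    (hf.tendsto _).comp (tend1 φ)
  rw [tendsto_pi_nhds] at fτ
  have h0 := fτ 0
  rw [nhds_discrete, Filter.tendsto_pure] at h0
  obtain ⟨n, hn⟩ := h0.exists
  rw [hN n (φ n), hk1 0] at hn
  have h1 : blockThenZeros (N n (φ n)) (M n (φ n)) 0 = N n (φ n) + 1 := by
    simp [blockThenZeros]
  have h2 : constSeq (k 0) 0 = k 0 := rfl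
  have := hφ n
  omega
end

section
/- In Baire space ω^ω, let 𝔸 := {(0^∞, 0^∞)} ∪ {((n+1)^{m+1}0^∞, (n+1)⌢m^∞) : n,m ∈ ω} and 𝔹 := {((n+1)^∞, 0^{n+1}1^∞) : n ∈ ω}. Then 𝔸 is not separable from 𝔹 by any set of the form C × U with C closed and U open in ω^ω; that is, whenever C is closed, U is open, and 𝔸 ⊆ C × U, then (C × U) ∩ 𝔹 ≠ ∅. -/
open Set

/-- `(n+1)⌢m^∞`: `n+1` followed by the constant value `m`. -/
def headThenConst (n m : ℕ) : ℕ → ℕ := fun i => if i = 0 then n + 1 else m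

/-- `0^{n+1}1^∞`: `n+1` zeros followed by ones. -/
def zerosThenOnes (n : ℕ) : ℕ → ℕ := fun i => if i < n + 1 then 0 else 1

/-- `𝔸 = {(0^∞,0^∞)} ∪ {((n+1)^{m+1}0^∞, (n+1)⌢m^∞)}` is not separable from
`𝔹 = {((n+1)^∞, 0^{n+1}1^∞)}` by a closed × open rectangle in Baire space. -/
theorem stmt11 (C U : Set (ℕ → ℕ)) (hC : IsClosed C) (hU : IsOpen U)
    (hsub : {p : (ℕ → ℕ) × (ℕ → ℕ) | p = ((fun _ => 0), (fun _ => 0)) ∨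
        ∃ n m, p = (blockThenZeros n m, headThenConst n m)} ⊆ C ×ˢ U) :
    ((C ×ˢ U) ∩
      {p : (ℕ → ℕ) × (ℕ → ℕ) | ∃ n, p = ((fun _ => n + 1), zerosThenOnes n)}).Nonempty := by
  have hA0 : ((fun _ => 0), (fun _ => 0)) ∈ C ×ˢ U := hsub (Or.inl rfl)
  have hAnm : ∀ n m, (blockThenZeros n m, headThenConst n m) ∈ C ×ˢ U :=
    fun n m => hsub (Or.inr ⟨n, m, rfl⟩)
  have htend : Filter.Tendsto zerosThenOnes Filter.atTop (nhds (fun _ => 0)) := by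
    rw [tendsto_pi_nhds]
    intro i
    rw [nhds_discrete, Filter.tendsto_pure]
    filter_upwards [Filter.eventually_ge_atTop i] with n hn
    simp only [zerosThenOnes, if_pos (by omega : i < n + 1)]
  obtain ⟨n, hnU⟩ := (htend.eventually (hU.eventually_mem hA0.2)).exists
  have htend2 : Filter.Tendsto (blockThenZeros n) Filter.atTop (nhds (fun _ => n + 1)) := by
    rw [tendsto_pi_nhds]
    intro i
    rw [nhds_discrete, Filter.tendsto_pure]
    filter_upwards [Filter.eventually_ge_atTop i] with m hm
    simp only [blockThenZeros, if_pos (by omega : i < m + 1)]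
  have hCmem : (fun _ => n + 1) ∈ C :=
    hC.mem_of_tendsto htend2 (Filter.Eventually.of_forall fun m => (hAnm n m).1)
  exact ⟨((fun _ => n + 1), zerosThenOnes n), ⟨hCmem, hnU⟩, ⟨n, rfl⟩⟩
end

section
/- Let F = ⋃ₙ Fₙ ⊆ 2^ω where (Fₙ) is an increasing sequence of closed sets, and suppose F is meager and dense in 2^ω. Define, for s ∈ 2^{<ω} with N_s ∩ F ≠ ∅, n_s := min{n : Fₙ ∩ N_s ≠ ∅}, and let D := {s : s = ∅ or n_s ≠ n_{s'} where s' is s with its last entry removed}. Set 𝔹_F := {(α,α) : α ∈ 2^ω ∖ F} (viewed inside (3^ω ∖ F) × 2^ω) and 𝔸_F := {(α,β) : ∃ s ∈ D, s⌢2 ⊑ α, s ⊑ β, β ∈ F_{n_s}}. Then 𝔹_F cannot be covered by a countable union ⋃ᵢ (Uᵢ × Vᵢ) with each Uᵢ open in 3^ω ∖ F and each Vᵢ closed in 2^ω, while keeping this union disjoint from 𝔸_F: for any such cover of 𝔹_F, some Uᵢ × Vᵢ meets 𝔸_F. -/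
/-! Every `N_s` meets `F`, so `n_s` is defined, and every `t` has an extension in `D`: otherwise
`n_s = n_t` for all `s ⊒ t`, so the closed set `F_{n_t}` meets every `N_s ⊆ N_t` and therefore
contains `N_t`, which is impossible for a subset of the meagre set `F`. Given the cover, the traces
of the rectangles on the diagonal of `2^ω` cover `2^ω ∖ F`, so by the Baire category theorem one
of them, say for `i`, contains a nonempty open set; hence there is `t` such that `N_t ⊆ Vᵢ` and
every point of `3^ω` extending `t` and avoiding `F` lies in `Uᵢ`. Extend `t` to `s ∈ D` and pick
`β ∈ F_{n_s} ∩ N_s`: then `(s⌢2⌢2⌢⋯, β) ∈ (Uᵢ × Vᵢ) ∩ 𝔸_F`. -/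

open Set

/-- The canonical inclusion of Cantor space `2^ω = ℕ → Bool` into `3^ω = ℕ → Fin 3`. -/
def boolToTri : Bool → Fin 3 := fun b => if b then 1 else 0

/-- The embedding `2^ω ↪ 3^ω`. -/
def embC : (ℕ → Bool) → (ℕ → Fin 3) := fun α i => boolToTri (α i)

/-- The basic clopen set `N_s` of extensions of the finite sequence `s` in Cantor space. -/
def NsC (s : List Bool) : Set (ℕ → Bool) := {α | ∀ i : Fin s.length, α i = s.get i}

open Filter PiNat

lemma eventually_cylinder_subset {E : ℕ → Type*} [∀ n, TopologicalSpace (E n)]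
    [∀ n, DiscreteTopology (E n)] {s : Set (∀ n, E n)} (hs : IsOpen s) {x : ∀ n, E n}
    (hx : x ∈ s) : ∀ᶠ n in atTop, cylinder x n ⊆ s := by
  obtain ⟨_, ⟨y, n, rfl⟩, hxy, hys⟩ :=
    (isTopologicalBasis_cylinders E).exists_subset_of_mem_open hx hs
  rw [← mem_cylinder_iff_eq.1 hxy] at hys
  exact eventually_atTop.2 ⟨n, fun m hm => (cylinder_anti x hm).trans hys⟩

lemma List.apply_eq_of_prefix {α β : Type*} {f : List α → β} {t : List α}
    (h : ∀ s, t <+: s → f s = f s.dropLast) {s : List α} (hts : t <+: s) : f s = f t := by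
  induction s using List.reverseRecOn with
  | nil => rw [List.prefix_nil.1 hts]
  | append_singleton l b ih =>
    rcases List.prefix_concat_iff.1 hts with rfl | htl
    · rfl
    · rw [h _ hts, List.dropLast_concat, ih htl]

def initSeg (x : ℕ → Bool) (n : ℕ) : List Bool := List.ofFn fun i : Fin n => x i

@[simp]
lemma length_initSeg (x : ℕ → Bool) (n : ℕ) : (initSeg x n).length = n :=
  List.length_ofFn

lemma NsC_initSeg (x : ℕ → Bool) (n : ℕ) : NsC (initSeg x n) = cylinder x n := by
  ext y
  simp [NsC, initSeg, Fin.forall_iff]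

lemma initSeg_prefix_initSeg (x : ℕ → Bool) {m n : ℕ} (h : m ≤ n) :
    initSeg x m <+: initSeg x n := by
  rw [List.prefix_iff_eq_take]
  apply List.ext_getElem <;> simp [initSeg, h]

lemma initSeg_length_eq_of_mem_NsC {x : ℕ → Bool} {s : List Bool} (hx : x ∈ NsC s) :
    initSeg x s.length = s := by
  apply List.ext_getElem <;> simp only [initSeg, List.length_ofFn, List.getElem_ofFn]
  exact fun i hi _ => hx ⟨i, hi⟩

lemma prefix_initSeg_of_mem_NsC {x : ℕ → Bool} {t : List Bool} (hx : x ∈ NsC t) {n : ℕ}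
    (hn : t.length ≤ n) : t <+: initSeg x n :=
  initSeg_length_eq_of_mem_NsC hx ▸ initSeg_prefix_initSeg x hn

lemma NsC_subset_of_prefix {s t : List Bool} (h : t <+: s) : NsC s ⊆ NsC t := by
  intro x hx i
  simpa [h.getElem] using hx ⟨i, i.isLt.trans_le h.length_le⟩

lemma NsC_nonempty (s : List Bool) : (NsC s).Nonempty :=
  ⟨fun j => if h : j < s.length then s[j] else false, fun i => by simp⟩

lemma isOpen_NsC (s : List Bool) : IsOpen (NsC s) := by
  obtain ⟨x, hx⟩ := NsC_nonempty s
  rw [← initSeg_length_eq_of_mem_NsC hx, NsC_initSeg]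
  exact isOpen_cylinder _ x _

lemma IsClosed.NsC_subset {G : Set (ℕ → Bool)} (hG : IsClosed G) {t : List Bool}
    (h : ∀ s, t <+: s → (G ∩ NsC s).Nonempty) : NsC t ⊆ G := by
  intro x hx
  rw [← hG.closure_eq, mem_closure_iff]
  intro O hO hxO
  obtain ⟨n, hnO, htn⟩ :=
    ((eventually_cylinder_subset hO hxO).and (eventually_ge_atTop t.length)).exists
  obtain ⟨y, hyG, hy⟩ := h _ (prefix_initSeg_of_mem_NsC hx htn)
  exact ⟨y, hnO (NsC_initSeg x n ▸ hy), hyG⟩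

lemma exists_prefix_ne_dropLast {G : ℕ → Set (ℕ → Bool)} (hG : ∀ n, IsClosed (G n))
    {ns : List Bool → ℕ} (hmeet : ∀ s, (G (ns s) ∩ NsC s).Nonempty)
    (hnot : ∀ t n, ¬ NsC t ⊆ G n) (t : List Bool) :
    ∃ s, t <+: s ∧ ns s ≠ ns s.dropLast := by
  by_contra! hconst
  refine hnot t (ns t) ((hG _).NsC_subset fun s hts => ?_)
  rw [← List.apply_eq_of_prefix hconst hts]
  exact hmeet s

lemma BaireSpace.exists_isOpen_subset_of_compl_subset_iUnion {X ι : Type*} [TopologicalSpace X]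
    [BaireSpace X] [Nonempty X] [Countable ι] {F : Set X} (hF : IsMeagre F) {W V : ι → Set X}
    (hW : ∀ i, IsOpen (W i)) (hV : ∀ i, IsClosed (V i)) (hcover : Fᶜ ⊆ ⋃ i, W i ∩ V i) :
    ∃ i O, IsOpen O ∧ O.Nonempty ∧ O ⊆ W i ∩ V i := by
  obtain ⟨i, hi⟩ : ∃ i, ¬ IsMeagre (W i ∩ V i) := by
    by_contra! h
    refine not_isMeagre_of_isOpen isOpen_univ univ_nonempty
      ((hF.union (isMeagre_iUnion h)).mono fun x _ => ?_)
    by_cases hx : x ∈ F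
    exacts [Or.inl hx, Or.inr (hcover hx)]
  have hint : (interior (closure (W i ∩ V i))).Nonempty :=
    nonempty_iff_ne_empty.2 fun h => hi (IsNowhereDense.isMeagre h)
  obtain ⟨x, hx, hxWV⟩ := mem_closure_iff.1 (interior_subset hint.some_mem) _ isOpen_interior
    hint.some_mem
  refine ⟨i, interior (closure (W i ∩ V i)) ∩ W i, isOpen_interior.inter (hW i),
    ⟨x, hx, hxWV.1⟩, fun y hy => ⟨hy.2, ?_⟩⟩
  exact closure_minimal inter_subset_right (hV i) (interior_subset hy.1)

lemma continuous_embC : Continuous embC :=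
  continuous_pi fun j => continuous_of_discreteTopology.comp (continuous_apply j)

lemma embC_injective : Function.Injective embC := by
  intro x y h
  funext i
  have := congrFun h i
  cases hx : x i <;> cases hy : y i <;> simp_all [embC, boolToTri]

def extendByTwo (s : List Bool) : ℕ → Fin 3 :=
  fun j => if h : j < s.length then boolToTri s[j] else 2

lemma extendByTwo_notMem_range_embC (s : List Bool) : extendByTwo s ∉ range embC := by
  rintro ⟨x, hx⟩
  have := congrFun hx s.length
  cases hxs : x s.length <;> simp_all [embC, boolToTri, extendByTwo]

lemma extendByTwo_mem_cylinder {x : ℕ → Bool} {n : ℕ} {s : List Bool}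
    (h : initSeg x n <+: s) : extendByTwo s ∈ cylinder (embC x) n := by
  intro j hj
  have hjs : j < s.length := hj.trans_le (by simpa using h.length_le)
  simp [extendByTwo, embC, hjs, ← h.getElem (by simpa using hj), initSeg]

theorem stmt13_general (Fseq : ℕ → Set (ℕ → Bool))
    (hclosed : ∀ n, IsClosed (Fseq n))
    (F : Set (ℕ → Bool)) (hF : F = ⋃ n, Fseq n)
    (hmeager : IsMeagre F) (hdense : Dense F)
    (ns : List Bool → ℕ) (hns : ∀ s, ns s = sInf {n | (Fseq n ∩ NsC s).Nonempty})
    (D : Set (List Bool)) (hD : D = {s | s = [] ∨ ns s ≠ ns s.dropLast})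
    (𝔹F 𝔸F : Set ({β : ℕ → Fin 3 // β ∉ embC '' F} × (ℕ → Bool)))
    (h𝔹F : 𝔹F = {p | p.1.1 = embC p.2 ∧ p.2 ∉ F})
    (h𝔸F : 𝔸F = {p | ∃ s ∈ D,
        (∀ i : Fin s.length, p.1.1 i = boolToTri (s.get i)) ∧ p.1.1 s.length = 2 ∧
        (∀ i : Fin s.length, p.2 i = s.get i) ∧ p.2 ∈ Fseq (ns s)})
    (U : ℕ → Set {β : ℕ → Fin 3 // β ∉ embC '' F}) (V : ℕ → Set (ℕ → Bool))
    (hU : ∀ i, IsOpen (U i)) (hV : ∀ i, IsClosed (V i))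
    (hcover : 𝔹F ⊆ ⋃ i, (U i) ×ˢ (V i)) :
    ∃ i, (((U i) ×ˢ (V i)) ∩ 𝔸F).Nonempty := by
  subst hF hD h𝔹F h𝔸F
  have hmeet (s : List Bool) : (Fseq (ns s) ∩ NsC s).Nonempty := by
    obtain ⟨x, hxF, hxs⟩ := hdense.exists_mem_open (isOpen_NsC s) (NsC_nonempty s)
    obtain ⟨n, hn⟩ := mem_iUnion.1 hxF
    rw [hns]
    exact Nat.sInf_mem (s := {n | (Fseq n ∩ NsC s).Nonempty}) ⟨n, x, hn, hxs⟩
  have hnot (t : List Bool) (n : ℕ) : ¬ NsC t ⊆ Fseq n := fun h =>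
    not_isMeagre_of_isOpen (isOpen_NsC t) (NsC_nonempty t)
      (hmeager.mono (h.trans (subset_iUnion Fseq n)))
  choose W hW hWU using fun i => isOpen_induced_iff.1 (hU i)
  have hcover_diag : (⋃ n, Fseq n)ᶜ ⊆ ⋃ i, embC ⁻¹' W i ∩ V i := fun x hx => by
    have hxF : embC x ∉ embC '' ⋃ n, Fseq n := embC_injective.mem_set_image.not.2 hx
    obtain ⟨i, hi⟩ := mem_iUnion.1 <| hcover (a := (⟨embC x, hxF⟩, x)) ⟨rfl, hx⟩
    exact mem_iUnion.2 ⟨i, (hWU i).symm.subset hi.1, hi.2⟩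
  obtain ⟨i, O, hO, ⟨x, hx⟩, hOWV⟩ := BaireSpace.exists_isOpen_subset_of_compl_subset_iUnion
    hmeager (fun i => (hW i).preimage continuous_embC) hV hcover_diag
  obtain ⟨n, hnO, hnW⟩ := ((eventually_cylinder_subset hO hx).and
    (eventually_cylinder_subset (hW i) (hOWV hx).1)).exists
  obtain ⟨s, hxs, hs⟩ := exists_prefix_ne_dropLast hclosed hmeet hnot (initSeg x n)
  obtain ⟨β, hβF, hβs⟩ := hmeet s
  have hδ : extendByTwo s ∉ embC '' ⋃ n, Fseq n := fun h =>
    extendByTwo_notMem_range_embC s (image_subset_range _ _ h)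
  refine ⟨i, (⟨extendByTwo s, hδ⟩, β), ⟨?_, ?_⟩, s, Or.inr hs, ?_, ?_, hβs, hβF⟩
  · exact (hWU i).subset (hnW (extendByTwo_mem_cylinder hxs))
  · exact (hOWV (hnO (NsC_initSeg x n ▸ NsC_subset_of_prefix hxs hβs))).2
  · intro j; simp [extendByTwo]
  · simp [extendByTwo]

/-- Theorem 19 of the paper (non-separability half): with `F = ⋃ₙ Fₙ` meager dense in `2^ω`
(the `Fₙ` closed increasing), `n_s = min{n : Fₙ ∩ N_s ≠ ∅}`,
`D = {s : s = ∅ ∨ n_s ≠ n_{s minus its last entry}}`,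
`𝔹_F = {(α, α) : α ∉ F} ⊆ (3^ω ∖ F) × 2^ω` and
`𝔸_F = {(α, β) : ∃ s ∈ D, s⌢2 ⊑ α, s ⊑ β, β ∈ F_{n_s}}`, any countable cover of `𝔹_F` by
rectangles `Uᵢ × Vᵢ` with `Uᵢ` open in `3^ω ∖ F` and `Vᵢ` closed in `2^ω` meets `𝔸_F`. -/
theorem stmt13 (Fseq : ℕ → Set (ℕ → Bool))
    (hclosed : ∀ n, IsClosed (Fseq n)) (hmono : Monotone Fseq)
    (F : Set (ℕ → Bool)) (hF : F = ⋃ n, Fseq n)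
    (hmeager : IsMeagre F) (hdense : Dense F)
    (ns : List Bool → ℕ) (hns : ∀ s, ns s = sInf {n | (Fseq n ∩ NsC s).Nonempty})
    (D : Set (List Bool)) (hD : D = {s | s = [] ∨ ns s ≠ ns s.dropLast})
    (𝔹F 𝔸F : Set ({β : ℕ → Fin 3 // β ∉ embC '' F} × (ℕ → Bool)))
    (h𝔹F : 𝔹F = {p | p.1.1 = embC p.2 ∧ p.2 ∉ F})
    (h𝔸F : 𝔸F = {p | ∃ s ∈ D,
        (∀ i : Fin s.length, p.1.1 i = boolToTri (s.get i)) ∧ p.1.1 s.length = 2 ∧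
        (∀ i : Fin s.length, p.2 i = s.get i) ∧ p.2 ∈ Fseq (ns s)})
    (U : ℕ → Set {β : ℕ → Fin 3 // β ∉ embC '' F}) (V : ℕ → Set (ℕ → Bool))
    (hU : ∀ i, IsOpen (U i)) (hV : ∀ i, IsClosed (V i))
    (hcover : 𝔹F ⊆ ⋃ i, (U i) ×ˢ (V i)) :
    ∃ i, (((U i) ×ˢ (V i)) ∩ 𝔸F).Nonempty :=
  stmt13_general Fseq hclosed F hF hmeager hdense ns hns D hD 𝔹F 𝔸F h𝔹F h𝔸F U V hU hV hcover
end

section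
/- In Baire space ω^ω, let Ψ enumerate bijectively the finite binary sequences that are empty or end in 1. Work in 𝕏 := 3^ω ∖ {α ∈ 2^ω : α(i) = 0 for all but finitely many i} and 𝕐 := 2^ω. Let 𝔹 := {(α,α) : α ∈ 2^ω, α(i) = 1 for infinitely many i} and 𝔸 := {(Ψ(m)⌢2⌢0^∞, Ψ(m)⌢0^∞) : m ∈ ω}. Then 𝔹 is not separable from 𝔸 by a countable union of sets Uᵢ × Vᵢ with Uᵢ open in 𝕏 and Vᵢ Fσ in 2^ω. -/
open Set Filter Topology

def seqX (s : List Bool) : ℕ → Fin 3 := fun i =>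
  if h : i < s.length then boolToTri (s.get ⟨i, h⟩) else if i = s.length then 2 else 0

def seqY (s : List Bool) : ℕ → Bool := fun i =>
  if h : i < s.length then s.get ⟨i, h⟩ else false

def IsFsigma {Z : Type*} [TopologicalSpace Z] (s : Set Z) : Prop :=
  ∃ C : ℕ → Set Z, (∀ n, IsClosed (C n)) ∧ s = ⋃ n, C n

/-!
Suppose `𝔹` is covered by rectangles `Uᵢ × Vᵢ`, and write each `Vᵢ` as a union of closed sets
`C_{i,n}`. Build finite sequences `s₀ ⊏ s₁ ⊏ ⋯`, each ending in `1`, such that the cylinder of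
`s_{k+1}` either misses the `k`-th closed set or lies inside it; this is always possible because a
closed set that does not contain a cylinder misses a smaller one. The limit `α` has infinitely
many `1`s, so `(α, α) ∈ 𝔹` lies in some `Uᵢ × C_{i,n}`. The cylinder chosen at stage `(i, n)`
contains `α`, so it lies inside `C_{i,n}`; it then contains `sₗ⌢0^∞` for all later `l`, while
`sₗ⌢2⌢0^∞ → α` in `𝕏`. Since `Uᵢ` is open, `(sₗ⌢2⌢0^∞, sₗ⌢0^∞) ∈ 𝔸` lies in `Uᵢ × Vᵢ` for
large `l`.
-/

section Cylinder

variable {β : Type*}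

def cylinderOf (t : List β) : Set (ℕ → β) := {y | ∀ j (h : j < t.length), y j = t[j]}

theorem cylinderOf_anti {s t : List β} (h : s <+: t) : cylinderOf t ⊆ cylinderOf s :=
  fun _ hy j hj => (hy j (hj.trans_le h.length_le)).trans (h.getElem hj).symm

theorem cylinderOf_ofFn (y : ℕ → β) (n : ℕ) :
    cylinderOf (List.ofFn fun j : Fin n => y j) = PiNat.cylinder y n := by
  ext z
  simp [cylinderOf, PiNat.mem_cylinder_iff]

theorem prefix_ofFn_of_mem_cylinderOf {s : List β} {y : ℕ → β} (hy : y ∈ cylinderOf s) {n : ℕ}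
    (hn : s.length ≤ n) : s <+: List.ofFn fun j : Fin n => y j :=
  List.prefix_iff_getElem.2 ⟨by simpa using hn, fun j hj => by simp [hy j hj]⟩

theorem exists_prefix_cylinderOf_subset_or_disjoint [TopologicalSpace β] [DiscreteTopology β]
    {C : Set (ℕ → β)} (hC : IsClosed C) (s : List β) (b : β) :
    ∃ t, s ++ [b] <+: t ∧ t.getLast? = some b ∧
      (cylinderOf t ⊆ C ∨ Disjoint (cylinderOf t) C) := by
  by_cases hsub : cylinderOf (s ++ [b]) ⊆ C
  · exact ⟨s ++ [b], List.prefix_refl _, List.getLast?_concat, Or.inl hsub⟩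
  obtain ⟨y, hys, hyC⟩ := not_subset.1 hsub
  obtain ⟨n, hn⟩ := PiNat.exists_disjoint_cylinder hC hyC
  set m := max n (s ++ [b]).length
  refine ⟨(List.ofFn fun j : Fin m => y j) ++ [b], ?_, List.getLast?_concat, Or.inr ?_⟩
  · exact (prefix_ofFn_of_mem_cylinderOf hys (le_max_right _ _)).trans (List.prefix_append _ _)
  · refine hn.symm.mono_left ((cylinderOf_anti (List.prefix_append _ _)).trans ?_)
    rw [cylinderOf_ofFn]
    exact PiNat.cylinder_anti y (le_max_left _ _)

theorem exists_chain_cylinderOf_subset_or_disjoint [TopologicalSpace β] [DiscreteTopology β]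
    (C : ℕ → Set (ℕ → β)) (hC : ∀ k, IsClosed (C k)) (b : β) :
    ∃ s : ℕ → List β, (∀ k, s k ++ [b] <+: s (k + 1)) ∧ (∀ k, (s (k + 1)).getLast? = some b) ∧
      ∀ k, cylinderOf (s (k + 1)) ⊆ C k ∨ Disjoint (cylinderOf (s (k + 1))) (C k) := by
  choose next hprefix hlast hdich using
    fun k s => exists_prefix_cylinderOf_subset_or_disjoint (hC k) s b
  exact ⟨fun k => Nat.rec [] next k, fun k => hprefix k _, fun k => hlast k _, fun k => hdich k _⟩

end Cylinder

section Chain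

variable {β : Type*} {s : ℕ → List β} {b : β}

theorem le_length_of_chain (hs : ∀ k, s k ++ [b] <+: s (k + 1)) (k : ℕ) : k ≤ (s k).length := by
  induction k with
  | zero => exact Nat.zero_le _
  | succ k ih =>
    have h := (hs k).length_le
    rw [List.length_append, List.length_singleton] at h
    omega

theorem prefix_of_chain (hs : ∀ k, s k ++ [b] <+: s (k + 1)) {k l : ℕ} (hkl : k ≤ l) :
    s k <+: s l := by
  induction l, hkl using Nat.le_induction with
  | base => exact List.prefix_refl _
  | succ l _ ih => exact ih.trans ((List.prefix_append _ _).trans (hs l))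

theorem exists_mem_cylinderOf_of_chain (hs : ∀ k, s k ++ [b] <+: s (k + 1)) :
    ∃ α : ℕ → β, ∀ k, α ∈ cylinderOf (s k) := by
  have hlen (j : ℕ) : j < (s (j + 1)).length := le_length_of_chain hs (j + 1)
  refine ⟨fun j => (s (j + 1))[j]'(hlen j), fun k j hj => ?_⟩
  rcases le_total (j + 1) k with h | h
  · exact (prefix_of_chain hs h).getElem (hlen j)
  · exact ((prefix_of_chain hs h).getElem hj).symm

theorem infinite_setOf_eq_of_chain (hs : ∀ k, s k ++ [b] <+: s (k + 1))
    (hlast : ∀ k, (s (k + 1)).getLast? = some b) {α : ℕ → β} (hα : ∀ k, α ∈ cylinderOf (s k)) :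
    {j | α j = b}.Infinite := by
  refine Set.infinite_of_forall_exists_gt fun N => ?_
  have hN := le_length_of_chain hs (N + 2)
  have hlt : (s (N + 2)).length - 1 < (s (N + 2)).length := by omega
  refine ⟨(s (N + 2)).length - 1, ?_, by omega⟩
  have hb := hlast (N + 1)
  rw [List.getLast?_eq_getElem?, List.getElem?_eq_getElem hlt] at hb
  exact (hα _ _ hlt).trans (Option.some.inj hb)

end Chain

theorem seqX_of_lt {s : List Bool} {j : ℕ} (hj : j < s.length) : seqX s j = boolToTri s[j] :=
  dif_pos hj

theorem seqY_mem_cylinderOf (s : List Bool) : seqY s ∈ cylinderOf s :=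
  fun _ hj => dif_pos hj

theorem not_eventually_zero_seqX (s : List Bool) :
    ¬ ((∀ i, seqX s i ≠ 2) ∧ ∃ N, ∀ i ≥ N, seqX s i = 0) :=
  fun h => h.1 s.length (by simp [seqX])

theorem not_eventually_zero_embC {α : ℕ → Bool} (h : {i | α i = true}.Infinite) :
    ¬ ((∀ i, embC α i ≠ 2) ∧ ∃ N, ∀ i ≥ N, embC α i = 0) := by
  rintro ⟨-, N, hN⟩
  obtain ⟨j, hj : α j = true, hjN⟩ := h.exists_gt N
  simpa [embC, boolToTri, hj] using hN j hjN.le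

theorem tendsto_seqX_embC {s : ℕ → List Bool} {α : ℕ → Bool} (hα : ∀ k, α ∈ cylinderOf (s k))
    (hlen : ∀ k, k ≤ (s k).length) : Tendsto (fun k => seqX (s k)) atTop (𝓝 (embC α)) := by
  refine tendsto_pi_nhds.2 fun j => tendsto_const_nhds.congr' ?_
  filter_upwards [eventually_gt_atTop j] with k hk
  have hj : j < (s k).length := hk.trans_le (hlen k)
  rw [seqX_of_lt hj, embC, hα k j hj]

abbrev 𝕏 : Type := {α : ℕ → Fin 3 // ¬ ((∀ i, α i ≠ 2) ∧ ∃ N, ∀ i ≥ N, α i = 0)}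

theorem stmt14_general (Ψ : ℕ → List Bool)
    (hΨrange : Set.range Ψ = {s : List Bool | s = [] ∨ s.getLast? = some true})
    (𝔹 𝔸 : Set ({α : ℕ → Fin 3 // ¬ ((∀ i, α i ≠ 2) ∧ ∃ N, ∀ i ≥ N, α i = 0)} × (ℕ → Bool)))
    (h𝔹 : 𝔹 = {p | p.1.1 = embC p.2 ∧ {i | p.2 i = true}.Infinite})
    (h𝔸 : 𝔸 = {p | ∃ m, p.1.1 = seqX (Ψ m) ∧ p.2 = seqY (Ψ m)})
    (U : ℕ → Set {α : ℕ → Fin 3 // ¬ ((∀ i, α i ≠ 2) ∧ ∃ N, ∀ i ≥ N, α i = 0)})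
    (V : ℕ → Set (ℕ → Bool))
    (hU : ∀ i, IsOpen (U i)) (hV : ∀ i, IsFsigma (V i))
    (hcover : 𝔹 ⊆ ⋃ i, (U i) ×ˢ (V i)) :
    ((⋃ i, (U i) ×ˢ (V i)) ∩ 𝔸).Nonempty := by
  choose C hC hCV using hV
  obtain ⟨s, hs, hlast, hdich⟩ := exists_chain_cylinderOf_subset_or_disjoint
    (fun k => C k.unpair.1 k.unpair.2) (fun k => hC _ _) true
  obtain ⟨α, hα⟩ := exists_mem_cylinderOf_of_chain hs
  have hinf := infinite_setOf_eq_of_chain hs hlast hα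
  set x : 𝕏 := ⟨embC α, not_eventually_zero_embC hinf⟩
  have hαB : (x, α) ∈ 𝔹 := h𝔹 ▸ ⟨rfl, hinf⟩
  obtain ⟨i, hUi, hVi⟩ := mem_iUnion.1 (hcover hαB)
  obtain ⟨n, hn⟩ := mem_iUnion.1 (hCV i ▸ hVi)
  have hk := hdich (Nat.pair i n)
  simp only [Nat.unpair_pair] at hk
  rcases hk with hsub | hdisj
  · have hlim : Tendsto (fun k => (⟨seqX (s (k + 1)), not_eventually_zero_seqX _⟩ : 𝕏)) atTop
        (𝓝 x) := tendsto_subtype_rng.2 <|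
      (tendsto_seqX_embC hα (le_length_of_chain hs)).comp (tendsto_add_atTop_nat 1)
    obtain ⟨l, hUl, hl⟩ :=
      ((hlim.eventually ((hU i).mem_nhds hUi)).and (eventually_ge_atTop (Nat.pair i n))).exists
    obtain ⟨m, hm⟩ : s (l + 1) ∈ range Ψ := hΨrange ▸ Or.inr (hlast l)
    have hVl : seqY (s (l + 1)) ∈ V i := hCV i ▸ mem_iUnion.2 ⟨n, hsub <|
      cylinderOf_anti (prefix_of_chain hs (by omega)) (seqY_mem_cylinderOf _)⟩
    refine ⟨(⟨seqX (s (l + 1)), not_eventually_zero_seqX _⟩, seqY (s (l + 1))),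
      mem_iUnion.2 ⟨i, hUl, hVl⟩, ?_⟩
    rw [h𝔸]
    exact ⟨m, by rw [hm], by rw [hm]⟩
  · exact (hdisj.notMem_of_mem_left (hα _) hn).elim

/-- In `𝕏 = 3^ω ∖ {α ∈ 2^ω : α eventually 0}` and `𝕐 = 2^ω`, with `Ψ` enumerating the finite
binary sequences that are empty or end in `1`, the set `𝔹 = {(α,α) : α ∈ 2^ω with infinitely
many 1's}` is not separable from `𝔸 = {(Ψ(m)⌢2⌢0^∞, Ψ(m)⌢0^∞)}` by a countable union of
rectangles `Uᵢ × Vᵢ` with `Uᵢ` open in `𝕏` and `Vᵢ` Fσ in `2^ω`. -/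
theorem stmt14 (Ψ : ℕ → List Bool) (hΨinj : Function.Injective Ψ)
    (hΨrange : Set.range Ψ = {s : List Bool | s = [] ∨ s.getLast? = some true})
    (𝔹 𝔸 : Set ({α : ℕ → Fin 3 // ¬ ((∀ i, α i ≠ 2) ∧ ∃ N, ∀ i ≥ N, α i = 0)} × (ℕ → Bool)))
    (h𝔹 : 𝔹 = {p | p.1.1 = embC p.2 ∧ {i | p.2 i = true}.Infinite})
    (h𝔸 : 𝔸 = {p | ∃ m, p.1.1 = seqX (Ψ m) ∧ p.2 = seqY (Ψ m)})
    (U : ℕ → Set {α : ℕ → Fin 3 // ¬ ((∀ i, α i ≠ 2) ∧ ∃ N, ∀ i ≥ N, α i = 0)})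
    (V : ℕ → Set (ℕ → Bool))
    (hU : ∀ i, IsOpen (U i)) (hV : ∀ i, IsFsigma (V i))
    (hcover : 𝔹 ⊆ ⋃ i, (U i) ×ˢ (V i)) :
    ((⋃ i, (U i) ×ˢ (V i)) ∩ 𝔸).Nonempty :=
  stmt14_general Ψ hΨrange 𝔹 𝔸 h𝔹 h𝔸 U V hU hV hcover
end
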